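/- Hamiltonian-derivative identity (intermediate step in the proof of Lemma 2.1(iii)): Suppose (u_h, q_h, p_h) together with numerical traces û_h, q̂_h, p̂_h satisfy the semidiscrete DG scheme with zero source, and that û_h and q_h depend differentiably on t. Then for every t ∈ [0,T], d/dt Σ_{i=1}^N ∫_{I_i} ( (ε/2) q_h(x,t)² − V(u_h(x,t)) ) dx = Σ_{i=1}^N ( ⟦p_h⟧(p̂_h − {p_h}) + ε ⟦q_h⟧ ∂_t(û_h − {u_h}) + ε ∂_t⟦u_h⟧ (q̂_h − {q_h}) )(x_i). -/

import Mathlib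

open Polynomial Set

noncomputable section

namespace DG

/-- A broken polynomial function in `W_h^k` (before imposing the degree bound):
the polynomial indexed by `i` is the restriction of the function to
element `I_i = (x (i-1), x i)`, for `i = 1,…,N`. -/
abbrev Broken := ℕ → Polynomial ℝ

/-- Membership in `W_h^k`: every elementwise polynomial has degree at most `k`. -/
def DegLE (k : ℕ) (P : Broken) : Prop := ∀ i, (P i).natDegree ≤ k

/-- `(F, G) = Σ_{i=1}^N ∫_{I_i} F_i G_i dx` for families of functions on the elements. -/
def ip (x : ℕ → ℝ) (N : ℕ) (F G : ℕ → ℝ → ℝ) : ℝ :=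
  ∑ i ∈ Finset.Icc 1 N, ∫ y in (x (i-1))..(x i), F i y * G i y

/-- the family of real functions determined by a broken polynomial -/
def ev (P : Broken) : ℕ → ℝ → ℝ := fun i y => (P i).eval y

/-- elementwise spatial derivative -/
def dx (P : Broken) : Broken := fun i => (P i).derivative

/-- `⟨φ̂, v n⟩ = Σ_{i=1}^N [φ̂(x_i) v(x_i⁻) - φ̂(x_{i-1}) v(x_{i-1}⁺)]` where `φ̂` is a
numerical trace, i.e. a function on the node indices. -/
def bt (x : ℕ → ℝ) (N : ℕ) (φ : ℕ → ℝ) (v : Broken) : ℝ :=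
  ∑ i ∈ Finset.Icc 1 N, (φ i * (v i).eval (x i) - φ (i - 1) * (v i).eval (x (i - 1)))

/-- the one-sided limit `ζ(x_i⁻)` of a broken polynomial at the node `x_i`, `i = 1,…,N` -/
def lv (x : ℕ → ℝ) (P : Broken) (i : ℕ) : ℝ := (P i).eval (x i)

/-- the one-sided limit `ζ(x_i⁺)` at the node `x_i`, with the periodic identification
`ζ(x_N⁺) = ζ(x_0⁺)` -/
def rv (x : ℕ → ℝ) (N : ℕ) (P : Broken) (i : ℕ) : ℝ :=
  if i = N then (P 1).eval (x 0) else (P (i + 1)).eval (x i)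

/-- the jump `⟦ζ⟧(x_i) = ζ(x_i⁻) - ζ(x_i⁺)` -/
def jmp (x : ℕ → ℝ) (N : ℕ) (P : Broken) (i : ℕ) : ℝ := lv x P i - rv x N P i

/-- the average `{ζ}(x_i) = (ζ(x_i⁻) + ζ(x_i⁺))/2` -/
def avg (x : ℕ → ℝ) (N : ℕ) (P : Broken) (i : ℕ) : ℝ := (lv x P i + rv x N P i) / 2

/-- the jump `⟦g(ζ)⟧(x_i)` of a composition `g ∘ ζ` -/
def jmpC (x : ℕ → ℝ) (N : ℕ) (g : ℝ → ℝ) (P : Broken) (i : ℕ) : ℝ :=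
  g (lv x P i) - g (rv x N P i)

/-- `η(w,v) = Σ_{i=1}^N ⟦w⟧⟦v⟧(x_i)` -/
def eta (x : ℕ → ℝ) (N : ℕ) (w v : Broken) : ℝ :=
  ∑ i ∈ Finset.Icc 1 N, jmp x N w i * jmp x N v i

/-- the mesh `a = x 0 < x 1 < ⋯ < x N = b` -/
structure Mesh (a b : ℝ) (N : ℕ) (x : ℕ → ℝ) : Prop where
  hab : a < b
  hN : 1 ≤ N
  left : x 0 = a
  right : x N = b
  mono : ∀ i, i < N → x i < x (i + 1)

/-- `Pf` is the elementwise L²-projection of the function `y ↦ f(ζ(y))` onto `W_h^k`: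
it has degree at most `k` and `∫_{I_i} (Pf - f(ζ)) w = 0` for every polynomial `w` of
degree at most `k` and every element `i`. -/
def IsProj (x : ℕ → ℝ) (N k : ℕ) (f : ℝ → ℝ) (P Pf : Broken) : Prop :=
  DegLE k Pf ∧ ∀ i ∈ Finset.Icc 1 N, ∀ w : Polynomial ℝ, w.natDegree ≤ k →
    (∫ y in (x (i-1))..(x i), ((Pf i).eval y - f ((P i).eval y)) * w.eval y) = 0

/-- a numerical trace takes equal values at the nodes `x_0` and `x_N` -/
def IsTrace (N : ℕ) (φ : ℕ → ℝ) : Prop := φ 0 = φ N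

/-- The semidiscrete DG scheme with zero source on `[0,T]`: `u q p : ℝ → Broken`
are the approximations (depending differentiably on `t`, with time derivatives
`ut qt pt`), and `uh qh ph` are the (possibly `t`-dependent) numerical traces. -/
structure Scheme (x : ℕ → ℝ) (N k : ℕ) (T ε : ℝ) (f : ℝ → ℝ)
    (u q p ut qt pt : ℝ → Broken) (uh qh ph : ℝ → ℕ → ℝ) : Prop where
  degu : ∀ t ∈ Icc (0:ℝ) T, DegLE k (u t)
  degq : ∀ t ∈ Icc (0:ℝ) T, DegLE k (q t)
  degp : ∀ t ∈ Icc (0:ℝ) T, DegLE k (p t)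
  degut : ∀ t ∈ Icc (0:ℝ) T, DegLE k (ut t)
  trace_u : ∀ t ∈ Icc (0:ℝ) T, IsTrace N (uh t)
  trace_q : ∀ t ∈ Icc (0:ℝ) T, IsTrace N (qh t)
  trace_p : ∀ t ∈ Icc (0:ℝ) T, IsTrace N (ph t)
  du : ∀ t ∈ Icc (0:ℝ) T, ∀ i, ∀ y : ℝ,
    HasDerivWithinAt (fun s => ((u s) i).eval y) (((ut t) i).eval y) (Icc (0:ℝ) T) t
  dq : ∀ t ∈ Icc (0:ℝ) T, ∀ i, ∀ y : ℝ,
    HasDerivWithinAt (fun s => ((q s) i).eval y) (((qt t) i).eval y) (Icc (0:ℝ) T) t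
  dp : ∀ t ∈ Icc (0:ℝ) T, ∀ i, ∀ y : ℝ,
    HasDerivWithinAt (fun s => ((p s) i).eval y) (((pt t) i).eval y) (Icc (0:ℝ) T) t
  eq1 : ∀ t ∈ Icc (0:ℝ) T, ∀ v : Broken, DegLE k v →
    ip x N (ev (q t)) (ev v) + ip x N (ev (u t)) (ev (dx v)) - bt x N (uh t) v = 0
  eq2 : ∀ t ∈ Icc (0:ℝ) T, ∀ z : Broken, DegLE k z →
    ip x N (ev (p t)) (ev z) + ε * ip x N (ev (q t)) (ev (dx z)) - ε * bt x N (qh t) z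
      = ip x N (fun i y => f (((u t) i).eval y)) (ev z)
  eq3 : ∀ t ∈ Icc (0:ℝ) T, ∀ w : Broken, DegLE k w →
    ip x N (ev (ut t)) (ev w) - ip x N (ev (p t)) (ev (dx w)) + bt x N (ph t) w = 0

end DG

/-!
Differentiating the Hamiltonian under the integral gives `ε (∂ₜq, q) - (f(u), ∂ₜu)`. Test the
time derivative of the first equation with `q`, the second equation with `∂ₜu` and the third
with `p`. Elementwise integration by parts turns `(w, z_x) + (w_x, z)` into the sum of the
jumps `⟦wz⟧ = {w}⟦z⟧ + ⟦w⟧{z}` (the periodic identification makes the boundary sums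
telescope into jump sums), and after these substitutions only the flux terms survive.

Differentiation under the integral is legitimate because a polynomial of degree `≤ k` is the
Lagrange interpolant of its values at `0, …, k`: each integral becomes a `C¹` function of these
finitely many values, which are differentiable in time by assumption.
-/

def lagrangeNode (k : ℕ) (m : Fin (k + 1)) : ℝ := (m : ℕ)

theorem lagrangeNode_injective (k : ℕ) : Function.Injective (lagrangeNode k) :=
  Nat.cast_injective.comp Fin.val_injective

def lagrangeEval (k : ℕ) (y : ℝ) : (Fin (k + 1) → ℝ) →L[ℝ] ℝ :=
  ((leval y).comp (Lagrange.interpolate Finset.univ (lagrangeNode k))).toContinuousLinearMap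

theorem lagrangeEval_apply (k : ℕ) (y : ℝ) (r : Fin (k + 1) → ℝ) :
    lagrangeEval k y r = (Lagrange.interpolate Finset.univ (lagrangeNode k) r).eval y := rfl

theorem continuous_lagrangeEval (k : ℕ) : Continuous (lagrangeEval k) :=
  continuous_clm_apply.2 fun r => (Lagrange.interpolate Finset.univ (lagrangeNode k) r).continuous

theorem eq_interpolate_of_natDegree_le {k : ℕ} {P : ℝ[X]} (hP : P.natDegree ≤ k) :
    P = Lagrange.interpolate Finset.univ (lagrangeNode k) fun m => P.eval (lagrangeNode k m) :=
  Lagrange.eq_interpolate (lagrangeNode_injective k).injOn <| by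
    rw [Finset.card_univ, Fintype.card_fin]
    exact (degree_le_natDegree.trans (WithBot.coe_le_coe.2 hP)).trans_lt
      (WithBot.coe_lt_coe.2 k.lt_succ_self)

theorem lagrangeEval_nodeValues {k : ℕ} {P : ℝ[X]} (hP : P.natDegree ≤ k) (y : ℝ) :
    lagrangeEval k y (fun m => P.eval (lagrangeNode k m)) = P.eval y := by
  rw [lagrangeEval_apply, ← eq_interpolate_of_natDegree_le hP]

theorem natDegree_le_of_hasDerivWithinAt_eval {k : ℕ} {s : Set ℝ} {t : ℝ}
    (hs : UniqueDiffWithinAt ℝ s t) (ht : t ∈ s) {P : ℝ → ℝ[X]} {Q : ℝ[X]}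
    (hdeg : ∀ τ ∈ s, (P τ).natDegree ≤ k)
    (hder : ∀ y, HasDerivWithinAt (fun τ => (P τ).eval y) (Q.eval y) s t) :
    Q.natDegree ≤ k := by
  have hQ : Q = Lagrange.interpolate Finset.univ (lagrangeNode k)
      fun m => Q.eval (lagrangeNode k m) := by
    refine Polynomial.funext fun y => hs.eq_deriv _ (hder y) ?_
    exact ((lagrangeEval k y).hasFDerivAt.comp_hasDerivWithinAt t
      (hasDerivWithinAt_pi.2 fun _ => hder _)).congr_of_mem
      (fun τ hτ => (lagrangeEval_nodeValues (hdeg τ hτ) y).symm) ht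
  have hlt := Lagrange.degree_interpolate_lt (s := Finset.univ)
      (fun m => Q.eval (lagrangeNode k m)) (lagrangeNode_injective k).injOn
  rw [Finset.card_univ, Fintype.card_fin, ← hQ] at hlt
  exact natDegree_le_iff_degree_le.2 (Order.le_of_lt_succ hlt)

theorem hasFDerivAt_intervalIntegral_comp_clm {E : Type*} [NormedAddCommGroup E]
    [NormedSpace ℝ E] [ProperSpace E] {L : ℝ → E →L[ℝ] ℝ} (hL : Continuous L)
    {F F' : ℝ → ℝ → ℝ} (hF : ∀ y z, HasDerivAt (F y) (F' y z) z)
    (hFc : Continuous (Function.uncurry F)) (hF'c : Continuous (Function.uncurry F'))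
    (w₀ : E) (c d : ℝ) :
    HasFDerivAt (fun w => ∫ y in c..d, F y (L y w))
      (∫ y in c..d, F' y (L y w₀) • L y) w₀ := by
  have hFL : ∀ w, Continuous fun y => F y (L y w) :=
    fun w => hFc.comp (continuous_id.prodMk (hL.clm_apply continuous_const))
  have hF'L : Continuous fun p : ℝ × E => F' p.1 (L p.1 p.2) • L p.1 :=
    (hF'c.comp (continuous_fst.prodMk ((hL.comp continuous_fst).clm_apply continuous_snd))).smul
      (hL.comp continuous_fst)
  obtain ⟨M, hM⟩ := ((isCompact_uIcc (a := c) (b := d)).prod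
    (isCompact_closedBall w₀ 1)).exists_bound_of_continuousOn hF'L.continuousOn
  refine intervalIntegral.hasFDerivAt_integral_of_dominated_of_fderiv_le (bound := fun _ => M)
    (Metric.closedBall_mem_nhds w₀ one_pos) (Filter.Eventually.of_forall fun w =>
      (hFL w).aestronglyMeasurable) ((hFL w₀).intervalIntegrable c d)
    (hF'L.comp (continuous_id.prodMk continuous_const)).aestronglyMeasurable
    (Filter.Eventually.of_forall fun y hy w hw => hM (y, w) ⟨uIoc_subset_uIcc hy, hw⟩)
    intervalIntegrable_const
    (Filter.Eventually.of_forall fun y _ w _ => (hF y (L y w)).comp_hasFDerivAt w (L y).hasFDerivAt)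

theorem hasDerivWithinAt_intervalIntegral_comp_eval {k : ℕ} {s : Set ℝ} {t : ℝ}
    (hs : UniqueDiffWithinAt ℝ s t) (ht : t ∈ s) {P : ℝ → ℝ[X]} {Q : ℝ[X]}
    (hdeg : ∀ τ ∈ s, (P τ).natDegree ≤ k)
    (hder : ∀ y, HasDerivWithinAt (fun τ => (P τ).eval y) (Q.eval y) s t)
    {F F' : ℝ → ℝ → ℝ} (hF : ∀ y z, HasDerivAt (F y) (F' y z) z)
    (hFc : Continuous (Function.uncurry F)) (hF'c : Continuous (Function.uncurry F'))
    (c d : ℝ) :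
    HasDerivWithinAt (fun τ => ∫ y in c..d, F y ((P τ).eval y))
      (∫ y in c..d, F' y ((P t).eval y) * Q.eval y) s t := by
  set r : ℝ → Fin (k + 1) → ℝ := fun τ m => (P τ).eval (lagrangeNode k m)
  have hQ := natDegree_le_of_hasDerivWithinAt_eval hs ht hdeg hder
  have hL := continuous_lagrangeEval k
  have hint : IntervalIntegrable (fun y => F' y (lagrangeEval k y (r t)) • lagrangeEval k y)
      MeasureTheory.volume c d :=
    ((hF'c.comp (continuous_id.prodMk (hL.clm_apply continuous_const))).smul hL).intervalIntegrable
      _ _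
  have h := (hasFDerivAt_intervalIntegral_comp_clm hL hF hFc hF'c (r t) c d).comp_hasDerivWithinAt t
    (hasDerivWithinAt_pi.2 fun _ => hder _ : HasDerivWithinAt r _ s t)
  rw [Function.comp_def, ContinuousLinearMap.intervalIntegral_apply hint] at h
  refine (h.congr_of_mem (fun τ hτ => ?_) ht).congr_deriv ?_
  · simp only [r, lagrangeEval_nodeValues (hdeg τ hτ)]
  · simp only [r, smul_apply, smul_eq_mul, lagrangeEval_nodeValues hQ,
      lagrangeEval_nodeValues (hdeg t ht)]

namespace DG

variable {x : ℕ → ℝ} {N : ℕ}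

theorem ip_comm (F G : ℕ → ℝ → ℝ) : ip x N F G = ip x N G F :=
  Finset.sum_congr rfl fun _ _ => intervalIntegral.integral_congr fun _ _ => mul_comm _ _

theorem sum_mul_eval_prev_eq_sum_mul_rv {φ : ℕ → ℝ} (hφ : IsTrace N φ) (v : Broken) :
    ∑ i ∈ Finset.Icc 1 N, φ (i - 1) * (v i).eval (x (i - 1))
      = ∑ i ∈ Finset.Icc 1 N, φ i * rv x N v i := by
  refine Finset.sum_nbij' (fun i => if i = 1 then N else i - 1)
    (fun j => if j = N then 1 else j + 1) ?_ ?_ ?_ ?_ ?_ <;>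
    intro i hi <;> rw [Finset.mem_Icc] at hi
  iterate 4 · split_ifs <;> (try rw [Finset.mem_Icc]) <;> omega
  · by_cases h : i = 1
    · simp [h, rv, hφ.symm]
    · simp only [h, if_false, rv, if_neg (by omega : i - 1 ≠ N), Nat.sub_add_cancel hi.1]

theorem bt_eq_sum_mul_jmp {φ : ℕ → ℝ} (hφ : IsTrace N φ) (v : Broken) :
    bt x N φ v = ∑ i ∈ Finset.Icc 1 N, φ i * jmp x N v i := by
  simp only [bt, jmp, lv, mul_sub, Finset.sum_sub_distrib, sum_mul_eval_prev_eq_sum_mul_rv hφ]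

theorem jmp_mul (A B : Broken) (i : ℕ) :
    jmp x N (A * B) i = avg x N A i * jmp x N B i + jmp x N A i * avg x N B i := by
  by_cases h : i = N <;> simp only [jmp, avg, lv, rv, h, Pi.mul_apply, eval_mul, if_true,
    if_false] <;> ring

theorem integral_eval_mul_add_integral_eval_mul (W Z : ℝ[X]) (c d : ℝ) :
    (∫ y in c..d, W.eval y * Z.derivative.eval y) + ∫ y in c..d, W.derivative.eval y * Z.eval y
      = (W * Z).eval d - (W * Z).eval c := by
  rw [intervalIntegral.integral_mul_deriv_eq_deriv_mul (fun y _ => W.hasDerivAt y)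
    (fun y _ => Z.hasDerivAt y) (W.derivative.continuous.intervalIntegrable _ _)
    (Z.derivative.continuous.intervalIntegrable _ _), eval_mul, eval_mul]
  ring

theorem ip_dx_add_ip_dx (W Z : Broken) :
    ip x N (ev W) (ev (dx Z)) + ip x N (ev (dx W)) (ev Z)
      = ∑ i ∈ Finset.Icc 1 N, (avg x N W i * jmp x N Z i + jmp x N W i * avg x N Z i) := by
  have hbt := bt_eq_sum_mul_jmp (x := x) (N := N) (φ := fun _ => 1) rfl (W * Z)
  simp only [bt, one_mul, jmp_mul] at hbt
  rw [← hbt, ip, ip, ← Finset.sum_add_distrib]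
  exact Finset.sum_congr rfl fun i _ => integral_eval_mul_add_integral_eval_mul _ _ _ _

theorem energy_identity {ε : ℝ} {q p qt ut : Broken} {F : ℕ → ℝ → ℝ}
    {uht qh ph : ℕ → ℝ}
    (huht : IsTrace N uht) (hqh : IsTrace N qh) (hph : IsTrace N ph)
    (h1 : ip x N (ev qt) (ev q) + ip x N (ev ut) (ev (dx q)) - bt x N uht q = 0)
    (h2 : ip x N (ev p) (ev ut) + ε * ip x N (ev q) (ev (dx ut)) - ε * bt x N qh ut
      = ip x N F (ev ut))
    (h3 : ip x N (ev ut) (ev p) - ip x N (ev p) (ev (dx p)) + bt x N ph p = 0) :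
    ε * ip x N (ev q) (ev qt) - ip x N F (ev ut)
      = ∑ i ∈ Finset.Icc 1 N, (jmp x N p i * (ph i - avg x N p i)
          + ε * jmp x N q i * (uht i - avg x N ut i)
          + ε * jmp x N ut i * (qh i - avg x N q i)) := by
  rw [bt_eq_sum_mul_jmp huht] at h1
  rw [bt_eq_sum_mul_jmp hqh] at h2
  rw [bt_eq_sum_mul_jmp hph] at h3
  have hut_q := ip_dx_add_ip_dx (x := x) (N := N) ut q
  have hp_p := ip_dx_add_ip_dx (x := x) (N := N) p p
  rw [ip_comm (ev (dx p)), ← two_mul] at hp_p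
  rw [ip_comm (ev (dx ut))] at hut_q
  have hsplit : ∑ i ∈ Finset.Icc 1 N, (jmp x N p i * (ph i - avg x N p i)
          + ε * jmp x N q i * (uht i - avg x N ut i)
          + ε * jmp x N ut i * (qh i - avg x N q i))
      = ε * ∑ i ∈ Finset.Icc 1 N, uht i * jmp x N q i
        + ε * ∑ i ∈ Finset.Icc 1 N, qh i * jmp x N ut i
        + ∑ i ∈ Finset.Icc 1 N, ph i * jmp x N p i
        - ε * ∑ i ∈ Finset.Icc 1 N, (avg x N ut i * jmp x N q i + jmp x N ut i * avg x N q i)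
        - (∑ i ∈ Finset.Icc 1 N,
            (avg x N p i * jmp x N p i + jmp x N p i * avg x N p i)) / 2 := by
    simp only [Finset.mul_sum, Finset.sum_div, ← Finset.sum_add_distrib,
      ← Finset.sum_sub_distrib]
    exact Finset.sum_congr rfl fun i _ => by ring
  rw [hsplit, ip_comm (ev q)]
  rw [ip_comm (ev ut)] at h3
  linear_combination ε * h1 + h2 - ε * hut_q - h3 - hp_p / 2

theorem hasDerivWithinAt_ip_ev {k : ℕ} {s : Set ℝ} {t : ℝ} (hs : UniqueDiffWithinAt ℝ s t)
    (ht : t ∈ s) {P : ℝ → Broken} {Q : Broken} (hdeg : ∀ τ ∈ s, DegLE k (P τ))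
    (hder : ∀ i y, HasDerivWithinAt (fun τ => (P τ i).eval y) ((Q i).eval y) s t) (G : Broken) :
    HasDerivWithinAt (fun τ => ip x N (ev (P τ)) (ev G)) (ip x N (ev Q) (ev G)) s t := by
  refine HasDerivWithinAt.fun_sum fun i _ => ?_
  refine (hasDerivWithinAt_intervalIntegral_comp_eval hs ht (fun τ hτ => hdeg τ hτ i) (hder i)
    (F := fun y z => z * (G i).eval y) (fun y z => hasDerivAt_mul_const ((G i).eval y))
    (continuous_snd.mul ((G i).continuous.comp continuous_fst))
    ((G i).continuous.comp continuous_fst) _ _).congr_deriv ?_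
  exact intervalIntegral.integral_congr fun y _ => mul_comm _ _

theorem hasDerivWithinAt_bt {s : Set ℝ} {t : ℝ} {φ : ℝ → ℕ → ℝ} {φ' : ℕ → ℝ}
    (hφ : ∀ i, HasDerivWithinAt (fun τ => φ τ i) (φ' i) s t) (v : Broken) :
    HasDerivWithinAt (fun τ => bt x N (φ τ) v) (bt x N φ' v) s t :=
  HasDerivWithinAt.fun_sum fun i _ => ((hφ i).mul_const _).sub ((hφ (i - 1)).mul_const _)

section Scheme

variable {k : ℕ} {T ε : ℝ} {f : ℝ → ℝ} {u q p ut qt pt : ℝ → Broken}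
  {uh qh ph : ℝ → ℕ → ℝ}

theorem Scheme.eq1_time_deriv (hS : Scheme x N k T ε f u q p ut qt pt uh qh ph) (hT : 0 < T)
    {t : ℝ} (ht : t ∈ Icc 0 T) {uht : ℕ → ℝ}
    (huht : ∀ i, HasDerivWithinAt (fun s => uh s i) (uht i) (Icc 0 T) t)
    {v : Broken} (hv : DegLE k v) :
    ip x N (ev (qt t)) (ev v) + ip x N (ev (ut t)) (ev (dx v)) - bt x N uht v = 0 := by
  have hU := uniqueDiffOn_Icc hT t ht
  exact hU.eq_deriv _
    (((hasDerivWithinAt_ip_ev hU ht hS.degq (hS.dq t ht) v).add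
      (hasDerivWithinAt_ip_ev hU ht hS.degu (hS.du t ht) (dx v))).sub (hasDerivWithinAt_bt huht v))
    ((hasDerivWithinAt_const t _ 0).congr_of_mem (fun s hs => hS.eq1 s hs v hv) ht)

theorem Scheme.hasDerivWithinAt_hamiltonian (hS : Scheme x N k T ε f u q p ut qt pt uh qh ph)
    (hT : 0 < T) (hf : Continuous f) {V : ℝ → ℝ} (hV : ∀ y, HasDerivAt V (f y) y)
    {t : ℝ} (ht : t ∈ Icc 0 T) :
    HasDerivWithinAt
      (fun s => ∑ i ∈ Finset.Icc 1 N,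
        ∫ y in (x (i-1))..(x i), ((ε/2) * ((q s) i).eval y ^ 2 - V (((u s) i).eval y)))
      (ε * ip x N (ev (q t)) (ev (qt t)) - ip x N (fun i y => f ((u t i).eval y)) (ev (ut t)))
      (Icc 0 T) t := by
  have hU := uniqueDiffOn_Icc hT t ht
  have hVc : Continuous V := continuous_iff_continuousAt.2 fun y => (hV y).continuousAt
  rw [ip, ip, Finset.mul_sum, ← Finset.sum_sub_distrib]
  refine HasDerivWithinAt.fun_sum fun i _ => ?_
  have hq := hasDerivWithinAt_intervalIntegral_comp_eval hU ht (fun s hs => hS.degq s hs i)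
    (hS.dq t ht i) (F := fun _ z => ε / 2 * z ^ 2) (F' := fun _ z => ε * z)
    (fun _ z => ((hasDerivAt_pow 2 z).const_mul (ε / 2)).congr_deriv (by ring))
    (continuous_const.mul (continuous_snd.pow 2)) (continuous_const.mul continuous_snd)
    (x (i - 1)) (x i)
  have hu := hasDerivWithinAt_intervalIntegral_comp_eval hU ht (fun s hs => hS.degu s hs i)
    (hS.du t ht i) (F := fun _ z => V z) (F' := fun _ z => f z) (fun _ z => hV z)
    (hVc.comp continuous_snd) (hf.comp continuous_snd) (x (i - 1)) (x i)
  refine ((hq.sub hu).congr_of_mem (fun s _ => ?_) ht).congr_deriv ?_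
  · exact intervalIntegral.integral_sub
      ((continuous_const.mul ((q s i).continuous.pow 2)).intervalIntegrable _ _)
      ((hVc.comp (u s i).continuous).intervalIntegrable _ _)
  · simp only [ev, mul_assoc, intervalIntegral.integral_const_mul]

end Scheme

end DG

theorem dg_hamiltonian_derivative_identity_general
    (N k : ℕ) (x : ℕ → ℝ)
    (T ε : ℝ) (hT : 0 < T) (f V : ℝ → ℝ) (hf : Continuous f)
    (hV : ∀ y : ℝ, HasDerivAt V (f y) y)
    (u q p ut qt pt : ℝ → DG.Broken) (uh qh ph : ℝ → ℕ → ℝ)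
    (hS : DG.Scheme x N k T ε f u q p ut qt pt uh qh ph)
    (uht : ℝ → ℕ → ℝ)
    (hduh : ∀ t ∈ Set.Icc (0:ℝ) T, ∀ i,
      HasDerivWithinAt (fun s => uh s i) (uht t i) (Set.Icc (0:ℝ) T) t) :
    ∀ t ∈ Set.Icc (0:ℝ) T,
      HasDerivWithinAt
        (fun s => ∑ i ∈ Finset.Icc 1 N,
          ∫ y in (x (i-1))..(x i), ((ε/2) * ((q s) i).eval y ^ 2 - V (((u s) i).eval y)))
        (∑ i ∈ Finset.Icc 1 N,
          (DG.jmp x N (p t) i * (ph t i - DG.avg x N (p t) i)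
            + ε * DG.jmp x N (q t) i * (uht t i - DG.avg x N (ut t) i)
            + ε * DG.jmp x N (ut t) i * (qh t i - DG.avg x N (q t) i)))
        (Set.Icc (0:ℝ) T) t := by
  intro t ht
  have huht : DG.IsTrace N (uht t) := (uniqueDiffOn_Icc hT t ht).eq_deriv _ (hduh t ht 0)
    ((hduh t ht N).congr_of_mem (fun s hs => hS.trace_u s hs) ht)
  rw [← DG.energy_identity huht (hS.trace_q t ht) (hS.trace_p t ht)
    (hS.eq1_time_deriv hT ht (hduh t ht) (hS.degq t ht)) (hS.eq2 t ht (ut t) (hS.degut t ht))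
    (hS.eq3 t ht (p t) (hS.degp t ht))]
  exact hS.hasDerivWithinAt_hamiltonian hT hf hV ht

/-- Hamiltonian-derivative identity (intermediate step in the proof of Lemma 2.1(iii)):
`d/dt Σᵢ ∫_{Iᵢ} ((ε/2) q_h² - V(u_h)) = Σᵢ (⟦p_h⟧(p̂_h - {p_h}) + ε⟦q_h⟧ ∂ₜ(û_h - {u_h})
 + ε ∂ₜ⟦u_h⟧ (q̂_h - {q_h}))(xᵢ)`, where `uht` is the time derivative of the trace `û_h`. -/
theorem dg_hamiltonian_derivative_identity
    (a b : ℝ) (N k : ℕ) (x : ℕ → ℝ) (hmesh : DG.Mesh a b N x)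
    (T ε : ℝ) (hT : 0 < T) (f V : ℝ → ℝ) (hf : Continuous f)
    (hV : ∀ y : ℝ, HasDerivAt V (f y) y)
    (u q p ut qt pt : ℝ → DG.Broken) (uh qh ph : ℝ → ℕ → ℝ)
    (hS : DG.Scheme x N k T ε f u q p ut qt pt uh qh ph)
    (uht : ℝ → ℕ → ℝ)
    (hduh : ∀ t ∈ Set.Icc (0:ℝ) T, ∀ i,
      HasDerivWithinAt (fun s => uh s i) (uht t i) (Set.Icc (0:ℝ) T) t) :
    ∀ t ∈ Set.Icc (0:ℝ) T,
      HasDerivWithinAt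
        (fun s => ∑ i ∈ Finset.Icc 1 N,
          ∫ y in (x (i-1))..(x i), ((ε/2) * ((q s) i).eval y ^ 2 - V (((u s) i).eval y)))
        (∑ i ∈ Finset.Icc 1 N,
          (DG.jmp x N (p t) i * (ph t i - DG.avg x N (p t) i)
            + ε * DG.jmp x N (q t) i * (uht t i - DG.avg x N (ut t) i)
            + ε * DG.jmp x N (ut t) i * (qh t i - DG.avg x N (q t) i)))
        (Set.Icc (0:ℝ) T) t :=
  dg_hamiltonian_derivative_identity_general N k x T ε hT f V hf hV u q p ut qt pt uh qh ph hS uht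
    hduh
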